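/- arXiv:2404.15703 — 2 statements merged into one kernel-verified Lean document; each statement's English description precedes it below -/
import Mathlib

section
/- (Unisolvence of AF3) If p is a bivariate polynomial of degree at most 2 on the reference triangle T with vertices v₁=(1,0), v₂=(0,1), v₃=(0,0), and p(v_j) = 0 and ∫₀¹ p(t v_{j+1} + (1-t)v_{j+2}) dt = 0 for j = 1,2,3 (indices mod 3), then p = 0. -/
/-!
Simpson's rule is exact for quadratics, and the restriction of `p` to an edge is a quadratic in
the edge parameter. Since `p` vanishes at the vertices, each edge average equals `2/3` of the value
of `p` at the edge midpoint, so `p` vanishes at the vertices and edge midpoints: the nodes of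
quadratic Lagrange interpolation, which determine a polynomial of degree at most two.
-/

open MvPolynomial

noncomputable section

/-- Vertices of the reference triangle. -/
def vtx : Fin 3 → ℝ × ℝ := ![(1, 0), (0, 1), (0, 0)]

/-- Barycentric coordinates on the reference triangle. -/
def lam : Fin 3 → ℝ × ℝ → ℝ := ![fun q => q.1, fun q => q.2, fun q => 1 - q.1 - q.2]

/-- The AF3 basis functions φᵢ = λᵢ(1 - 3λ_{i+1} - 3λ_{i+2}). -/
def bphi (i : Fin 3) (q : ℝ × ℝ) : ℝ :=
  lam i q * (1 - 3 * lam (i + 1) q - 3 * lam (i + 2) q)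

/-- The AF3 basis functions ϕᵢ = 6 λ_{i+1} λ_{i+2}. -/
def sphi (i : Fin 3) (q : ℝ × ℝ) : ℝ := 6 * lam (i + 1) q * lam (i + 2) q

/-- Evaluation of a bivariate polynomial at a point of ℝ². -/
def evalP (p : MvPolynomial (Fin 2) ℝ) (q : ℝ × ℝ) : ℝ :=
  MvPolynomial.eval ![q.1, q.2] p

def xyExp (a b : ℕ) : Fin 2 →₀ ℕ := Finsupp.single 0 a + Finsupp.single 1 b

@[simp]
lemma xyExp_apply_zero (a b : ℕ) : xyExp a b 0 = a := by simp [xyExp]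

@[simp]
lemma xyExp_apply_one (a b : ℕ) : xyExp a b 1 = b := by simp [xyExp]

@[simp]
lemma xyExp_inj {a b a' b' : ℕ} : xyExp a b = xyExp a' b' ↔ a = a' ∧ b = b' := by
  refine ⟨fun h => ⟨?_, ?_⟩, fun ⟨ha, hb⟩ => ha ▸ hb ▸ rfl⟩
  · simpa using DFunLike.congr_fun h 0
  · simpa using DFunLike.congr_fun h 1

lemma eq_xyExp (d : Fin 2 →₀ ℕ) : d = xyExp (d 0) (d 1) := by
  ext i; fin_cases i <;> simp

def quadExponents : Finset (Fin 2 →₀ ℕ) :=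
  {xyExp 0 0, xyExp 1 0, xyExp 0 1, xyExp 2 0, xyExp 1 1, xyExp 0 2}

section

variable {R : Type*} [CommSemiring R]

lemma mem_quadExponents_of_mem_support {p : MvPolynomial (Fin 2) R}
    (hp : p.totalDegree ≤ 2) {d : Fin 2 →₀ ℕ} (hd : d ∈ p.support) : d ∈ quadExponents := by
  have hdeg : d 0 + d 1 ≤ 2 := by
    have := le_totalDegree hd
    rw [Finsupp.sum_fintype _ _ (fun _ => rfl), Fin.sum_univ_two] at this
    omega
  rw [eq_xyExp d]
  have : d 0 ≤ 2 := by omega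
  have : d 1 ≤ 2 := by omega
  interval_cases d 0 <;> interval_cases d 1 <;> simp_all [quadExponents]

lemma eq_zero_of_coeff_quadExponents_eq_zero {p : MvPolynomial (Fin 2) R} (hp : p.totalDegree ≤ 2)
    (h : ∀ d ∈ quadExponents, coeff d p = 0) : p = 0 := by
  refine support_eq_empty.mp (Finset.eq_empty_of_forall_notMem fun d hd => ?_)
  exact mem_support_iff.mp hd (h d (mem_quadExponents_of_mem_support hp hd))

lemma eval_eq_of_totalDegree_le_two {p : MvPolynomial (Fin 2) R}
    (hp : p.totalDegree ≤ 2) (x y : R) :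
    eval ![x, y] p = coeff (xyExp 0 0) p + coeff (xyExp 1 0) p * x + coeff (xyExp 0 1) p * y
      + coeff (xyExp 2 0) p * x ^ 2 + coeff (xyExp 1 1) p * (x * y)
      + coeff (xyExp 0 2) p * y ^ 2 := by
  rw [eval_eq', Finset.sum_subset (fun d => mem_quadExponents_of_mem_support hp)
    (fun d _ hd => by rw [notMem_support_iff.mp hd, zero_mul])]
  simp only [quadExponents, Nat.succ_eq_add_one, Nat.reduceAdd, Fin.prod_univ_two, Fin.isValue,
    Matrix.cons_val_zero, Matrix.cons_val_one, Matrix.cons_val_fin_one, Finset.mem_insert, xyExp_inj,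
    zero_ne_one, and_true, and_false, OfNat.zero_ne_ofNat, and_self, Finset.mem_singleton, or_self,
    not_false_eq_true, Finset.sum_insert, xyExp_apply_zero, pow_zero, xyExp_apply_one, mul_one,
    one_ne_zero, OfNat.one_ne_ofNat, pow_one, one_mul, OfNat.ofNat_ne_one, OfNat.ofNat_ne_zero,
    Finset.sum_singleton]
  ring

end

lemma integral_unitInterval_eq_simpson {f : ℝ → ℝ} {A B C : ℝ}
    (hf : ∀ t, f t = A + B * t + C * t ^ 2) :
    ∫ t in (0:ℝ)..1, f t = (f 0 + 4 * f (1 / 2) + f 1) / 6 := by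
  have hint : ∀ g : ℝ → ℝ, Continuous g → IntervalIntegrable g MeasureTheory.volume 0 1 :=
    fun g hg => hg.intervalIntegrable 0 1
  simp only [hf]
  rw [intervalIntegral.integral_add (hint _ (by fun_prop)) (hint _ (by fun_prop)),
    intervalIntegral.integral_add (hint _ (by fun_prop)) (hint _ (by fun_prop)),
    intervalIntegral.integral_const, intervalIntegral.integral_const_mul,
    intervalIntegral.integral_const_mul, integral_id, integral_pow]
  ring

lemma evalP_segment_eq_quadratic {p : MvPolynomial (Fin 2) ℝ} (hp : p.totalDegree ≤ 2)
    (a b : ℝ × ℝ) : ∃ A B C : ℝ, ∀ t : ℝ, evalP p (t • a + (1 - t) • b) = A + B * t + C * t ^ 2 := by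
  obtain ⟨a₁, a₂⟩ := a
  obtain ⟨b₁, b₂⟩ := b
  set c : ℕ → ℕ → ℝ := fun i j => coeff (xyExp i j) p
  set d₁ := a₁ - b₁
  set d₂ := a₂ - b₂
  -- the Taylor coefficients of `p` at `b` in the direction `a - b`
  refine ⟨evalP p (b₁, b₂),
    c 1 0 * d₁ + c 0 1 * d₂ + 2 * c 2 0 * b₁ * d₁ + c 1 1 * (b₁ * d₂ + b₂ * d₁)
      + 2 * c 0 2 * b₂ * d₂,
    c 2 0 * d₁ ^ 2 + c 1 1 * d₁ * d₂ + c 0 2 * d₂ ^ 2, fun t => ?_⟩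
  simp only [Prod.smul_mk, Prod.mk_add_mk, smul_eq_mul, evalP, eval_eq_of_totalDegree_le_two hp,
    c, d₁, d₂]
  ring

lemma integral_segment_eq_simpson {p : MvPolynomial (Fin 2) ℝ} (hp : p.totalDegree ≤ 2)
    (a b : ℝ × ℝ) :
    ∫ t in (0:ℝ)..1, evalP p (t • a + (1 - t) • b)
      = (evalP p b + 4 * evalP p ((2⁻¹ : ℝ) • (a + b)) + evalP p a) / 6 := by
  obtain ⟨A, B, C, h⟩ := evalP_segment_eq_quadratic hp a b
  rw [integral_unitInterval_eq_simpson h]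
  norm_num

lemma eq_zero_of_evalP_P2_nodes_eq_zero {p : MvPolynomial (Fin 2) ℝ} (hp : p.totalDegree ≤ 2)
    (h₀₀ : evalP p (0, 0) = 0) (h₁₀ : evalP p (1, 0) = 0) (h₀₁ : evalP p (0, 1) = 0)
    (hm₁₀ : evalP p (2⁻¹, 0) = 0) (hm₀₁ : evalP p (0, 2⁻¹) = 0)
    (hm₁₁ : evalP p (2⁻¹, 2⁻¹) = 0) : p = 0 := by
  simp only [evalP, eval_eq_of_totalDegree_le_two hp] at h₀₀ h₁₀ h₀₁ hm₁₀ hm₀₁ hm₁₁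
  refine eq_zero_of_coeff_quadExponents_eq_zero hp ?_
  simp only [quadExponents, Finset.mem_insert, Finset.mem_singleton, forall_eq_or_imp, forall_eq]
  refine ⟨?_, ?_, ?_, ?_, ?_, ?_⟩ <;> linarith

theorem AF3_unisolvent (p : MvPolynomial (Fin 2) ℝ) (hp : p.totalDegree ≤ 2)
    (hv : ∀ j : Fin 3, evalP p (vtx j) = 0)
    (he : ∀ j : Fin 3,
      (∫ t in (0:ℝ)..1, evalP p (t • vtx (j + 1) + (1 - t) • vtx (j + 2))) = 0) :
    p = 0 := by
  have hmid : ∀ j : Fin 3, evalP p ((2⁻¹ : ℝ) • (vtx (j + 1) + vtx (j + 2))) = 0 := by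
    intro j
    have h := he j
    rw [integral_segment_eq_simpson hp, hv, hv] at h
    linarith
  apply eq_zero_of_evalP_P2_nodes_eq_zero hp (hv 2) (hv 0) (hv 1)
  · simpa [vtx] using hmid 1
  · simpa [vtx] using hmid 0
  · simpa [vtx] using hmid 2

end
end

section
/- (Unisolvence of the first enriched family) Let α > -1 with α ≠ -6/7. If p is a bivariate polynomial of degree at most 2 on the reference triangle T with vertices v₁=(1,0), v₂=(0,1), v₃=(0,0) such that ∫₀¹ p(t v_{j+1} + (1-t)v_{j+2}) dt = 0 and ∫₀¹ t^α(1-t)^α p(t v_j + (1-t) m_j) dt = 0 for j = 1,2,3, where m_j = (v_{j+1}+v_{j+2})/2 is the midpoint of the edge opposite v_j (indices mod 3), then p = 0. -/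
/-!
Write `p = a + b x + c y + d x² + e x y + f y²`. Along any segment `t ↦ t • P + (1 - t) • Q`,
`p` is a quadratic `a₀ + a₁ t + a₂ t²` in `t`, so an edge average equals `a₀ + a₁ / 2 + a₂ / 3`.
The moments `μₖ = ∫₀¹ tᵏ w_α(t) dt` are Beta values `B(α + k + 1, α + 1)`, and
`B(s + 1, t) = s / (s + t) B(s, t)` gives `μ₁ = μ₀ / 2` and `μ₂ = κ μ₀` with
`κ = (α + 2) / (2 (2α + 3))`; since `μ₀ > 0`, a median functional vanishes iff
`a₀ + a₁ / 2 + κ a₂ = 0`. The six conditions form a linear system in `a, …, f` whose determinant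
is a nonzero multiple of `(9κ - 2)² (9κ - 4)`, and `9κ = 4` exactly when `α = -6/7`, while
`9κ = 2` only for `α = -6`.
-/

open MvPolynomial

noncomputable section

/-- Midpoint of the edge opposite vertex `j`. -/
def mid (j : Fin 3) : ℝ × ℝ := (1 / 2 : ℝ) • (vtx (j + 1) + vtx (j + 2))

open MeasureTheory intervalIntegral Set ProbabilityTheory

lemma integral_rpow_mul_one_sub_rpow {a b : ℝ} (ha : -1 < a) (hb : -1 < b) :
    ∫ t in (0:ℝ)..1, t ^ a * (1 - t) ^ b = beta (a + 1) (b + 1) := by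
  rw [beta_eq_betaIntegralReal _ _ (by linarith) (by linarith), Complex.betaIntegral,
    ← Complex.ofReal_re (∫ t in (0:ℝ)..1, t ^ a * (1 - t) ^ b), ← integral_ofReal]
  congr 1
  refine integral_congr fun t ht => ?_
  rw [uIcc_of_le zero_le_one] at ht
  push_cast
  rw [Complex.ofReal_cpow ht.1, Complex.ofReal_cpow (sub_nonneg.2 ht.2)]
  push_cast
  ring_nf

lemma ProbabilityTheory.beta_add_one_left {a b : ℝ} (ha : 0 < a) (hb : 0 < b) :
    beta (a + 1) b = a / (a + b) * beta a b := by
  rw [beta, beta, add_right_comm, Real.Gamma_add_one ha.ne', Real.Gamma_add_one (add_pos ha hb).ne']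
  field_simp

def jacobiMoment (α : ℝ) (k : ℕ) : ℝ :=
  ∫ t in (0:ℝ)..1, t ^ α * (1 - t) ^ α * t ^ k

section JacobiMoment

variable {α : ℝ}

lemma jacobiMoment_eq_beta (hα : -1 < α) (k : ℕ) :
    jacobiMoment α k = beta (α + k + 1) (α + 1) := by
  rw [← integral_rpow_mul_one_sub_rpow (by linarith [k.cast_nonneg (α := ℝ)]) hα, jacobiMoment]
  refine integral_congr_ae (Filter.Eventually.of_forall fun t ht => ?_)
  rw [uIoc_of_le zero_le_one] at ht
  rw [Real.rpow_add_natCast ht.1.ne']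
  ring

lemma jacobiMoment_pos (hα : -1 < α) (k : ℕ) : 0 < jacobiMoment α k := by
  rw [jacobiMoment_eq_beta hα]
  exact beta_pos (by linarith [k.cast_nonneg (α := ℝ)]) (by linarith)

lemma intervalIntegrable_jacobiWeight_mul_pow (hα : -1 < α) (k : ℕ) :
    IntervalIntegrable (fun t : ℝ => t ^ α * (1 - t) ^ α * t ^ k) volume 0 1 :=
  intervalIntegrable_of_integral_ne_zero (jacobiMoment_pos hα k).ne'

lemma jacobiMoment_succ (hα : -1 < α) (k : ℕ) :
    jacobiMoment α (k + 1) = (α + k + 1) / (2 * α + k + 2) * jacobiMoment α k := by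
  have hk : 0 < α + k + 1 := by linarith [k.cast_nonneg (α := ℝ)]
  rw [jacobiMoment_eq_beta hα, jacobiMoment_eq_beta hα, Nat.cast_succ, ← add_assoc,
    beta_add_one_left hk (by linarith)]
  ring_nf

lemma jacobiMoment_one (hα : -1 < α) : jacobiMoment α 1 = jacobiMoment α 0 / 2 := by
  have hα₁ : α + 1 ≠ 0 := by linarith
  rw [jacobiMoment_succ hα 0, Nat.cast_zero, add_zero, add_zero,
    show 2 * α + 2 = 2 * (α + 1) by ring, div_mul_cancel_right₀ hα₁]
  ring

lemma jacobiMoment_two (hα : -1 < α) :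
    jacobiMoment α 2 = (α + 2) / (2 * (2 * α + 3)) * jacobiMoment α 0 := by
  rw [jacobiMoment_succ hα 1, jacobiMoment_one hα, Nat.cast_one,
    show α + 1 + 1 = α + 2 by ring, show 2 * α + 1 + 2 = 2 * α + 3 by ring, mul_comm 2, ← div_div]
  ring

end JacobiMoment

lemma integral_mul_quadratic {w : ℝ → ℝ}
    (hw : ∀ k ≤ 2, IntervalIntegrable (fun t => w t * t ^ k) volume 0 1) (a₀ a₁ a₂ : ℝ) :
    ∫ t in (0:ℝ)..1, w t * (a₀ + a₁ * t + a₂ * t ^ 2) =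
      a₀ * (∫ t in (0:ℝ)..1, w t * t ^ 0) + a₁ * (∫ t in (0:ℝ)..1, w t * t ^ 1)
        + a₂ * ∫ t in (0:ℝ)..1, w t * t ^ 2 := by
  have h := fun k (hk : k ≤ 2) (r : ℝ) => (hw k hk).const_mul r
  rw [← intervalIntegral.integral_const_mul, ← intervalIntegral.integral_const_mul,
    ← intervalIntegral.integral_const_mul,
    ← integral_add (h 0 (by norm_num) a₀) (h 1 (by norm_num) a₁),
    ← integral_add ((h 0 (by norm_num) a₀).add (h 1 (by norm_num) a₁)) (h 2 le_rfl a₂)]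
  congr 1 with t
  ring

lemma integral_quadratic (a₀ a₁ a₂ : ℝ) :
    ∫ t in (0:ℝ)..1, a₀ + a₁ * t + a₂ * t ^ 2 = a₀ + a₁ / 2 + a₂ / 3 := by
  have h := integral_mul_quadratic (w := 1)
    (fun k _ => (continuous_const.mul (continuous_pow k)).intervalIntegrable 0 1) a₀ a₁ a₂
  simp only [Pi.one_apply, one_mul] at h
  rw [h]
  norm_num
  ring

lemma integral_jacobiWeight_mul_quadratic {α : ℝ} (hα : -1 < α) (a₀ a₁ a₂ : ℝ) :
    ∫ t in (0:ℝ)..1, t ^ α * (1 - t) ^ α * (a₀ + a₁ * t + a₂ * t ^ 2) =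
      jacobiMoment α 0 * (a₀ + a₁ / 2 + (α + 2) / (2 * (2 * α + 3)) * a₂) := by
  rw [integral_mul_quadratic (fun k _ => intervalIntegrable_jacobiWeight_mul_pow hα k)]
  change a₀ * jacobiMoment α 0 + a₁ * jacobiMoment α 1 + a₂ * jacobiMoment α 2 = _
  rw [jacobiMoment_one hα, jacobiMoment_two hα]
  ring

def quadPoly (a b c d e f : ℝ) : MvPolynomial (Fin 2) ℝ :=
  C a + C b * X 0 + C c * X 1 + C d * X 0 ^ 2 + C e * (X 0 * X 1) + C f * X 1 ^ 2

open Finsupp in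
lemma exists_eq_quadPoly {p : MvPolynomial (Fin 2) ℝ} (hp : p.totalDegree ≤ 2) :
    ∃ a b c d e f : ℝ, p = quadPoly a b c d e f := by
  refine ⟨coeff 0 p, coeff (single 0 1) p, coeff (single 1 1) p, coeff (single 0 2) p,
    coeff (single 0 1 + single 1 1) p, coeff (single 1 2) p, ?_⟩
  ext m
  obtain ⟨i, j, rfl⟩ : ∃ i j : ℕ, m = single 0 i + single 1 j :=
    ⟨m 0, m 1, by ext k; fin_cases k <;> simp⟩
  simp only [quadPoly, X, monomial_pow, monomial_mul, ← monomial_zero', coeff_add, coeff_monomial,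
    Finsupp.ext_iff, Fin.forall_fin_two, Finsupp.coe_zero, Finsupp.coe_add, Pi.zero_apply,
    Pi.add_apply, smul_single, smul_eq_mul, single_eq_same, single_eq_of_ne, ne_eq, zero_ne_one,
    one_ne_zero, not_false_eq_true, add_zero, zero_add, mul_one, one_pow]
  by_cases hij : i + j ≤ 2
  · have : i ≤ 2 := by omega
    have : j ≤ 2 := by omega
    interval_cases i <;> interval_cases j <;> first | omega | simp
  · rw [coeff_eq_zero_of_totalDegree_lt (by
      rw [← degree_apply, map_add, degree_single, degree_single]; omega)]
    split_ifs <;> first | omega | simp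

section Quadratic

variable (a b c d e f : ℝ)

lemma evalP_quadPoly (q : ℝ × ℝ) :
    evalP (quadPoly a b c d e f) q =
      a + b * q.1 + c * q.2 + d * q.1 ^ 2 + e * (q.1 * q.2) + f * q.2 ^ 2 := by
  simp [quadPoly, evalP]

lemma evalP_quadPoly_segment (P Q : ℝ × ℝ) (t : ℝ) :
    evalP (quadPoly a b c d e f) (t • P + (1 - t) • Q) =
      let q₂ := d * (P.1 - Q.1) ^ 2 + e * ((P.1 - Q.1) * (P.2 - Q.2)) + f * (P.2 - Q.2) ^ 2
      evalP (quadPoly a b c d e f) Q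
        + (evalP (quadPoly a b c d e f) P - evalP (quadPoly a b c d e f) Q - q₂) * t
        + q₂ * t ^ 2 := by
  simp only [evalP_quadPoly, Prod.fst_add, Prod.snd_add, Prod.smul_fst, Prod.smul_snd, smul_eq_mul]
  ring

end Quadratic

lemma quadPoly_eq_zero_of_first_family {κ a b c d e f : ℝ} (hκ₂ : 9 * κ ≠ 2) (hκ₄ : 9 * κ ≠ 4)
    (h₁ : a + c / 2 + f / 3 = 0) (h₂ : a + b / 2 + d / 3 = 0)
    (h₃ : a + b / 2 + c / 2 + d / 3 + e / 6 + f / 3 = 0)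
    (h₄ : a + b / 2 + c / 4 + κ * d + (1 / 4 - κ / 2) * e + κ * f / 4 = 0)
    (h₅ : a + b / 4 + c / 2 + κ * d / 4 + (1 / 4 - κ / 2) * e + κ * f = 0)
    (h₆ : a + b / 4 + c / 4 + κ * (d + e + f) / 4 = 0) :
    quadPoly a b c d e f = 0 := by
  obtain rfl : e = 6 * a := by linarith
  obtain rfl : b = -2 * a - 2 * d / 3 := by linarith
  obtain rfl : c = -2 * a - 2 * f / 3 := by linarith
  obtain rfl : f = d := by
    have : (9 * κ - 2) * (d - f) = 0 := by linear_combination 12 * h₄ - 12 * h₅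
    linarith [(mul_eq_zero.1 this).resolve_left (sub_ne_zero.2 hκ₂)]
  have hdet : (9 * κ - 2) * (9 * κ - 4) ≠ 0 := mul_ne_zero (sub_ne_zero.2 hκ₂) (sub_ne_zero.2 hκ₄)
  have ha : (9 * κ - 2) * (9 * κ - 4) * a = 0 := by
    linear_combination (5 * κ - 2) * 6 * h₆ - (3 * κ - 2) * 4 * h₄
  have hd : (9 * κ - 2) * (9 * κ - 4) * f = 0 := by
    linear_combination 9 * κ * 4 * h₄ - 4 * (1 - 3 * κ) * 6 * h₆
  obtain rfl := (mul_eq_zero.1 ha).resolve_left hdet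
  obtain rfl := (mul_eq_zero.1 hd).resolve_left hdet
  simp [quadPoly]

theorem first_family_unisolvent (α : ℝ) (hα : -1 < α) (hα7 : α ≠ -6 / 7)
    (p : MvPolynomial (Fin 2) ℝ) (hp : p.totalDegree ≤ 2)
    (hCR : ∀ j : Fin 3,
      (∫ t in (0:ℝ)..1, evalP p (t • vtx (j + 1) + (1 - t) • vtx (j + 2))) = 0)
    (hF : ∀ j : Fin 3,
      (∫ t in (0:ℝ)..1, t ^ α * (1 - t) ^ α * evalP p (t • vtx j + (1 - t) • mid j)) = 0) :
    p = 0 := by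
  obtain ⟨a, b, c, d, e, f, rfl⟩ := exists_eq_quadPoly hp
  simp only [evalP_quadPoly_segment, integral_quadratic, integral_jacobiWeight_mul_quadratic hα,
    mul_eq_zero, (jacobiMoment_pos hα 0).ne', false_or] at hCR hF
  have h₁ := hCR 0
  have h₂ := hCR 1
  have h₃ := hCR 2
  have h₄ := hF 0
  have h₅ := hF 1
  have h₆ := hF 2
  simp only [vtx, mid, Fin.reduceAdd, Matrix.cons_val, Matrix.cons_val_zero, Matrix.cons_val_one,
    evalP_quadPoly, Prod.mk_add_mk, Prod.smul_mk, smul_eq_mul] at h₁ h₂ h₃ h₄ h₅ h₆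
  have h2α : 2 * (2 * α + 3) ≠ 0 := ne_of_gt (by linarith)
  refine quadPoly_eq_zero_of_first_family (κ := (α + 2) / (2 * (2 * α + 3)))
    (fun h => by rw [mul_div_assoc', div_eq_iff h2α] at h; linarith)
    (fun h => hα7 (by rw [mul_div_assoc', div_eq_iff h2α] at h; linarith))
    (by linear_combination h₁) (by linear_combination h₂) (by linear_combination h₃)
    (by linear_combination h₄) (by linear_combination h₅) (by linear_combination h₆)

end
end
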